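/- Let m ≡ 2 (mod 4) with m ≥ 10, n = 2^m − 1, let h be an integer with 0 < h ≤ (m−6)/2, and a = 2^{(m+4)/2} − 1. Then: (i) if h ≥ 4 and h is even, then for every integer k with 1 ≤ k ≤ 2^{(m−4)/2} + 2 or with 2^m − 2^{(m−4)/2} − 1 ≤ k ≤ 2^m − 2, the residue a·k mod n lies in D_{(1,m)}; (ii) if 0 < h ≤ 3, or if h ≥ 4 and h is odd, then for every integer k with 1 ≤ k ≤ 2^{(m−4)/2} or with 2^m − 2^{(m−4)/2} − 1 ≤ k ≤ 2^m − 2, the residue a·k mod n lies in D_{(1,m)}. -/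

import Mathlib

open Polynomial

noncomputable def wt2 (a : ℕ) : ℕ := (Nat.digits 2 a).sum

noncomputable def ell (m i : ℕ) : ℕ :=
  sInf {l : ℕ | 0 < l ∧ i * 2 ^ l % (2 ^ m - 1) = i % (2 ^ m - 1)}

noncomputable def coset (m i : ℕ) : Finset ℕ :=
  (Finset.range (ell m i)).image (fun j => i * 2 ^ j % (2 ^ m - 1))

noncomputable def rho (m i : ℕ) : ℕ := ((coset m i).filter (fun x => x % 2 = 0)).card

noncomputable def vv (m i : ℕ) : ℕ := m * rho m i / ell m i % 2

noncomputable def Tset (m j : ℕ) : Finset ℕ :=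
  (Finset.range (2 ^ m - 1)).filter (fun i => vv m i = j)

noncomputable def Nset (m j : ℕ) : Finset ℕ :=
  (Finset.range (2 ^ m - 1)).filter (fun a => a ≠ 0 ∧ wt2 a % 2 = j)

noncomputable def epsilon (h a : ℕ) : ℕ :=
  if a = 2 ^ h - 1 then 1 else sInf {t : ℕ | 2 ^ h - 1 ≤ 2 ^ t * a}

noncomputable def kappa (h a : ℕ) : ℕ := epsilon h a % 2

noncomputable def leader (m i : ℕ) : ℕ := sInf {x : ℕ | x ∈ coset m i}

noncomputable def uu (m h i : ℕ) : ℕ :=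
  if leader m i = 1 then (vv m 1 + h + 1) % 2
  else if leader m i % 2 = 1 ∧ leader m i ≤ 2 ^ h - 1 then
    (kappa h (leader m i) + vv m (leader m i)) % 2
  else vv m (leader m i)

noncomputable def Dset (m h j : ℕ) : Finset ℕ :=
  (Finset.range (2 ^ m - 1)).filter (fun i => uu m h i = j)

noncomputable def cyclicCode (m : ℕ) (α : GaloisField 2 m) (T : Set ℕ) :
    Submodule (ZMod 2) (Polynomial (ZMod 2)) :=
  Polynomial.degreeLT (ZMod 2) (2 ^ m - 1) ⊓
    ⨅ j ∈ T, LinearMap.ker (Polynomial.aeval (α ^ j)).toLinearMap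

def minDistGE (C : Submodule (ZMod 2) (Polynomial (ZMod 2))) (d : ℕ) : Prop :=
  ∀ c ∈ C, c ≠ 0 → d ≤ c.support.card

/-!
For `i < n = 2 ^ m - 1`, multiplication by `2` modulo `n` rotates the `m`-bit expansion of `i`.
Hence all elements of the coset of `i` have the binary weight `wt i` of `i`, and counting the odd
elements over `m` rotations gives `m ρ_i / l_i = m - wt i`, i.e. `v_i ≡ m - wt i (mod 2)`. For even
`m`, every `i` of odd weight larger than `max h 1` lies in `D_(1,m)`: its coset leader is neither `1`
nor at most `2 ^ h - 1`, so `u_i = v_i = 1`.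

Write `m = 2c + 4` with `c` odd and `h < c`, and `a = 2 ^ (c + 4) - 1`. For `1 ≤ k ≤ 2 ^ c` the product
`a k < n` has weight `c + 4`; for `k = n - t` with `1 ≤ t ≤ 2 ^ c` the residue `n - a t` has weight
`c`; and `a (2 ^ c + 2) ≡ 2 ^ (c + 5) - 1 - 2 ^ c` has weight `c + 4`. The last residue
`a (2 ^ c + 1) ≡ 2 ^ c · 15` has coset leader `15`, and for even `h ≥ 4` the correction
`κ_15 = 1` puts it in `D_(1,m)`.
-/

lemma wt2_add_two_mul {b : ℕ} (hb : b < 2) (y : ℕ) : wt2 (b + 2 * y) = b + wt2 y := by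
  rcases Nat.eq_zero_or_pos (b + 2 * y) with h0 | hpos
  · obtain ⟨rfl, rfl⟩ : b = 0 ∧ y = 0 := by omega
    rfl
  · rw [wt2, Nat.digits_add 2 one_lt_two b y hb (by omega), List.sum_cons]
    rfl

lemma wt2_eq_mod_two_add (x : ℕ) : wt2 x = x % 2 + wt2 (x / 2) := by
  conv_lhs => rw [← Nat.mod_add_div x 2]
  exact wt2_add_two_mul (Nat.mod_lt x two_pos) _

lemma wt2_add_two_pow_mul {t x : ℕ} (hx : x < 2 ^ t) (y : ℕ) :
    wt2 (x + 2 ^ t * y) = wt2 x + wt2 y := by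
  induction t generalizing x with
  | zero => obtain rfl : x = 0 := by omega
            simp [wt2]
  | succ t ih =>
    have hsplit : x + 2 ^ (t + 1) * y = x % 2 + 2 * (x / 2 + 2 ^ t * y) := by
      rw [pow_succ, mul_right_comm]; omega
    rw [hsplit, wt2_add_two_mul (Nat.mod_lt x two_pos), ih (by rw [pow_succ] at hx; omega),
      wt2_eq_mod_two_add x, add_assoc]

lemma wt2_two_pow_mul (j y : ℕ) : wt2 (2 ^ j * y) = wt2 y := by
  simpa [wt2] using wt2_add_two_pow_mul (Nat.two_pow_pos j) y

lemma wt2_one : wt2 1 = 1 := by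
  simp [wt2]

lemma wt2_two_pow (j : ℕ) : wt2 (2 ^ j) = 1 := by
  simpa [wt2_one] using wt2_two_pow_mul j 1

lemma wt2_le_of_lt_two_pow {t x : ℕ} (hx : x < 2 ^ t) : wt2 x ≤ t := by
  induction t generalizing x with
  | zero => obtain rfl : x = 0 := by omega
            simp [wt2]
  | succ t ih =>
    rw [wt2_eq_mod_two_add]
    have := ih (x := x / 2) (by rw [pow_succ] at hx; omega)
    omega

lemma wt2_two_pow_sub_one_sub {t x : ℕ} (hx : x < 2 ^ t) : wt2 (2 ^ t - 1 - x) = t - wt2 x := by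
  induction t generalizing x with
  | zero => obtain rfl : x = 0 := by omega
            simp [wt2]
  | succ t ih =>
    have hx2 : x / 2 < 2 ^ t := by rw [pow_succ] at hx; omega
    have hsplit : 2 ^ (t + 1) - 1 - x = (1 - x % 2) + 2 * (2 ^ t - 1 - x / 2) := by
      rw [pow_succ]; omega
    rw [hsplit, wt2_add_two_mul (by omega), ih hx2, wt2_eq_mod_two_add x]
    have := wt2_le_of_lt_two_pow hx2
    omega

lemma wt2_two_pow_sub_one (t : ℕ) : wt2 (2 ^ t - 1) = t := by
  simpa [wt2] using wt2_two_pow_sub_one_sub (Nat.two_pow_pos t)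

lemma two_pow_wt2_sub_one_le (x : ℕ) : 2 ^ wt2 x - 1 ≤ x := by
  induction x using Nat.strong_induction_on with
  | _ x ih =>
    rcases Nat.eq_zero_or_pos x with rfl | hx
    · simp [wt2]
    · have := ih (x / 2) (by omega)
      rw [wt2_eq_mod_two_add, pow_add]
      rcases Nat.mod_two_eq_zero_or_one x with h | h <;> rw [h] <;> omega

lemma wt2_eq_sum_bits {t x : ℕ} (hx : x < 2 ^ t) :
    wt2 x = ∑ b ∈ Finset.range t, x / 2 ^ b % 2 := by
  induction t generalizing x with
  | zero => obtain rfl : x = 0 := by omega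
            simp [wt2]
  | succ t ih =>
    rw [Finset.sum_range_succ', wt2_eq_mod_two_add, ih (by rw [pow_succ] at hx; omega)]
    simp only [pow_succ', ← Nat.div_div_eq_div_mul, pow_zero, Nat.div_one]
    ring

lemma wt2_two_pow_sub_one_mul {T k : ℕ} (hk : 1 ≤ k) (hkT : k ≤ 2 ^ T) :
    wt2 ((2 ^ T - 1) * k) = T := by
  have hsplit : (2 ^ T - 1) * k = (2 ^ T - 1 - (k - 1)) + 2 ^ T * (k - 1) := by
    obtain ⟨k, rfl⟩ : ∃ k', k = k' + 1 := ⟨k - 1, by omega⟩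
    rw [Nat.sub_one_mul, mul_add_one, Nat.add_sub_cancel]
    omega
  rw [hsplit, wt2_add_two_pow_mul (by omega), wt2_two_pow_sub_one_sub (by omega)]
  have := wt2_le_of_lt_two_pow (show k - 1 < 2 ^ T by omega)
  omega

lemma add_mul_mul_mod_mul_sub_one {P Q c d : ℕ} (hd : d < Q)
    (h : d + Q * c < P * Q - 1) : (d + Q * c) * P % (P * Q - 1) = c + P * d := by
  have hPQ : 1 ≤ P * Q := by omega
  have hc : c < P := Nat.lt_of_mul_lt_mul_left (a := Q) (by rw [mul_comm Q P]; omega)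
  have hrot : (d + Q * c) * P = (c + P * d) + c * (P * Q - 1) := by
    zify [hPQ]; ring
  rw [hrot, Nat.add_mul_mod_self_right, Nat.mod_eq_of_lt]
  -- `c + P * d = P * Q - 1` would force `c = P - 1` and `d = Q - 1`, contradicting `h`
  zify [hPQ] at h ⊢
  nlinarith [mul_nonneg (show (0:ℤ) ≤ P by positivity) (show (0:ℤ) ≤ Q - 1 - d by omega),
    mul_nonneg (show (0:ℤ) ≤ Q by positivity) (show (0:ℤ) ≤ P - 1 - c by omega)]

section Rotation

variable {m i : ℕ}

lemma mul_two_pow_mod_eq (hi : i < 2 ^ m - 1) {j : ℕ} (hj : j ≤ m) :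
    i * 2 ^ j % (2 ^ m - 1) = i / 2 ^ (m - j) + 2 ^ j * (i % 2 ^ (m - j)) := by
  have hPQ : 2 ^ j * 2 ^ (m - j) = 2 ^ m := by rw [← pow_add, Nat.add_sub_cancel' hj]
  have hi' := Nat.mod_add_div i (2 ^ (m - j))
  rw [← hPQ] at hi ⊢
  conv_lhs => rw [← hi']
  exact add_mul_mul_mod_mul_sub_one (Nat.mod_lt _ (Nat.two_pow_pos _)) (by omega)

lemma mul_two_pow_self_mod (hi : i < 2 ^ m - 1) : i * 2 ^ m % (2 ^ m - 1) = i := by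
  simpa [Nat.mod_one] using mul_two_pow_mod_eq hi le_rfl

lemma wt2_mul_two_pow_mod (hi : i < 2 ^ m - 1) {j : ℕ} (hj : j ≤ m) :
    wt2 (i * 2 ^ j % (2 ^ m - 1)) = wt2 i := by
  have hc : i / 2 ^ (m - j) < 2 ^ j := by
    rw [Nat.div_lt_iff_lt_mul (Nat.two_pow_pos _), ← pow_add, Nat.add_sub_cancel' hj]
    omega
  rw [mul_two_pow_mod_eq hi hj, wt2_add_two_pow_mul hc]
  conv_rhs => rw [← Nat.mod_add_div i (2 ^ (m - j))]
  rw [wt2_add_two_pow_mul (Nat.mod_lt _ (Nat.two_pow_pos _)), add_comm]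

lemma mul_two_pow_mod_mod_two (hi : i < 2 ^ m - 1) {j : ℕ} (hj : j < m) :
    i * 2 ^ j % (2 ^ m - 1) % 2 = i / 2 ^ ((m - j) % m) % 2 := by
  rw [mul_two_pow_mod_eq hi hj.le]
  rcases Nat.eq_zero_or_pos j with rfl | hj0
  · simp [Nat.div_eq_of_lt (show i < 2 ^ m by omega), Nat.mod_eq_of_lt (show i < 2 ^ m by omega)]
  · have : 2 ∣ 2 ^ j * (i % 2 ^ (m - j)) := (dvd_pow_self 2 hj0.ne').mul_right _
    rw [Nat.mod_eq_of_lt (show m - j < m by omega)]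
    omega

lemma sum_mul_two_pow_mod_mod_two (hi : i < 2 ^ m - 1) :
    ∑ j ∈ Finset.range m, i * 2 ^ j % (2 ^ m - 1) % 2 = wt2 i := by
  have hinv : ∀ j < m, (m - (m - j) % m) % m = j := by
    intro j hj
    rcases Nat.eq_zero_or_pos j with rfl | hj0
    · simp
    · rw [Nat.mod_eq_of_lt (show m - j < m by omega), Nat.mod_eq_of_lt (by omega)]
      omega
  rw [wt2_eq_sum_bits (show i < 2 ^ m by omega)]
  refine Finset.sum_nbij' (fun j => (m - j) % m) (fun j => (m - j) % m) ?_ ?_ ?_ ?_ ?_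
    <;> intro j hj <;> simp only [Finset.mem_range] at hj ⊢
  · exact Nat.mod_lt _ (by omega)
  · exact Nat.mod_lt _ (by omega)
  · exact hinv j hj
  · exact hinv j hj
  · exact mul_two_pow_mod_mod_two hi hj

end Rotation

open Function

theorem Function.IsPeriodicPt.sum_range_mul {α M : Type*} [AddCommMonoid M] {f : α → α} {x : α}
    {p : ℕ} (hp : IsPeriodicPt f p x) (g : α → M) (q : ℕ) :
    ∑ j ∈ Finset.range (q * p), g (f^[j] x) = q • ∑ j ∈ Finset.range p, g (f^[j] x) := by
  induction q with
  | zero => simp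
  | succ q ih =>
    rw [add_mul, one_mul, Finset.sum_range_add, ih, succ_nsmul]
    simp only [add_comm (q * p), iterate_add_apply, (hp.const_mul q).eq]

-- `coset m i` is the orbit of `i` under this map, and `ell m i` its minimal period.
def mulTwoMod (m : ℕ) (x : ℕ) : ℕ := x * 2 % (2 ^ m - 1)

section Coset

variable {m i : ℕ}

lemma pos_of_lt_two_pow_sub_one (hi : i < 2 ^ m - 1) : 0 < m :=
  Nat.pos_of_ne_zero (by rintro rfl; simp at hi)

lemma iterate_mulTwoMod (hi : i < 2 ^ m - 1) (j : ℕ) :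
    (mulTwoMod m)^[j] i = i * 2 ^ j % (2 ^ m - 1) := by
  induction j with
  | zero => simp [Nat.mod_eq_of_lt hi]
  | succ j ih => rw [iterate_succ_apply', ih, mulTwoMod, Nat.mod_mul_mod, pow_succ, mul_assoc]

lemma isPeriodicPt_mulTwoMod (hi : i < 2 ^ m - 1) : IsPeriodicPt (mulTwoMod m) m i := by
  rw [IsPeriodicPt, IsFixedPt, iterate_mulTwoMod hi, mul_two_pow_self_mod hi]

lemma ell_eq_minimalPeriod (hi : i < 2 ^ m - 1) : ell m i = minimalPeriod (mulTwoMod m) i := by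
  have hm := pos_of_lt_two_pow_sub_one hi
  have hmem : ∀ l, l ∈ {l : ℕ | 0 < l ∧ i * 2 ^ l % (2 ^ m - 1) = i % (2 ^ m - 1)} ↔
      0 < l ∧ IsPeriodicPt (mulTwoMod m) l i := by
    intro l
    rw [Set.mem_ofPred_eq, IsPeriodicPt, IsFixedPt, iterate_mulTwoMod hi, Nat.mod_eq_of_lt hi]
  have hper := isPeriodicPt_mulTwoMod hi
  refine le_antisymm (Nat.sInf_le ((hmem _).2 ⟨hper.minimalPeriod_pos hm,
    isPeriodicPt_minimalPeriod _ _⟩)) ?_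
  obtain ⟨hpos, hell⟩ := (hmem _).1 (Nat.sInf_mem ⟨m, (hmem m).2 ⟨hm, hper⟩⟩)
  exact hell.minimalPeriod_le hpos

lemma coset_eq_image (hi : i < 2 ^ m - 1) :
    coset m i = (Finset.range (minimalPeriod (mulTwoMod m) i)).image ((mulTwoMod m)^[·] i) := by
  simp only [coset, ell_eq_minimalPeriod hi, iterate_mulTwoMod hi]

lemma vv_eq (hi : i < 2 ^ m - 1) : vv m i = (m - wt2 i) % 2 := by
  have hm := pos_of_lt_two_pow_sub_one hi
  have hper := isPeriodicPt_mulTwoMod hi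
  set l := minimalPeriod (mulTwoMod m) i
  have hl : 0 < l := hper.minimalPeriod_pos hm
  obtain ⟨q, hq⟩ : l ∣ m := hper.minimalPeriod_dvd
  set S := ∑ j ∈ Finset.range l, (mulTwoMod m)^[j] i % 2
  have hrho : rho m i + S = l := by
    have hinj : Set.InjOn ((mulTwoMod m)^[·] i)
        ((Finset.range l).filter fun j => (mulTwoMod m)^[j] i % 2 = 0) := by
      refine iterate_injOn_Iio_minimalPeriod.mono fun j hj => ?_
      simpa using (Finset.mem_filter.1 hj).1
    rw [rho, coset_eq_image hi, Finset.filter_image, Finset.card_image_of_injOn hinj,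
      Finset.card_filter, ← Finset.sum_add_distrib]
    rw [Finset.sum_congr rfl fun j _ => show (if (mulTwoMod m)^[j] i % 2 = 0 then 1 else 0)
      + (mulTwoMod m)^[j] i % 2 = 1 by split <;> omega]
    simp
  have hwt : q * S = wt2 i := calc
    q * S = ∑ j ∈ Finset.range (q * l), (mulTwoMod m)^[j] i % 2 := by
      rw [(isPeriodicPt_minimalPeriod _ _).sum_range_mul (· % 2) q, smul_eq_mul]
    _ = ∑ j ∈ Finset.range m, i * 2 ^ j % (2 ^ m - 1) % 2 := by
      rw [mul_comm q l, ← hq]; simp only [iterate_mulTwoMod hi]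
    _ = wt2 i := sum_mul_two_pow_mod_mod_two hi
  have hdiv : m * rho m i / l = q * rho m i := by
    rw [hq, mul_assoc, Nat.mul_div_cancel_left _ hl]
  have hsum : q * rho m i + q * S = m := by rw [← mul_add, hrho, hq, mul_comm]
  rw [vv, ell_eq_minimalPeriod hi, hdiv]
  omega

lemma mul_two_pow_mod_mem_coset (hi : i < 2 ^ m - 1) (j : ℕ) :
    i * 2 ^ j % (2 ^ m - 1) ∈ coset m i := by
  have hm := pos_of_lt_two_pow_sub_one hi
  rw [coset_eq_image hi, ← iterate_mulTwoMod hi, ← iterate_mod_minimalPeriod_eq]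
  exact Finset.mem_image_of_mem _ (Finset.mem_range.2 (Nat.mod_lt _
    ((isPeriodicPt_mulTwoMod hi).minimalPeriod_pos hm)))

lemma self_mem_coset (hi : i < 2 ^ m - 1) : i ∈ coset m i := by
  simpa [Nat.mod_eq_of_lt hi] using mul_two_pow_mod_mem_coset hi 0

lemma wt2_of_mem_coset (hi : i < 2 ^ m - 1) {x : ℕ} (hx : x ∈ coset m i) : wt2 x = wt2 i := by
  have hm := pos_of_lt_two_pow_sub_one hi
  rw [coset_eq_image hi] at hx
  obtain ⟨j, hj, rfl⟩ := Finset.mem_image.1 hx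
  have hjm : j ≤ m := (Finset.mem_range.1 hj).le.trans
    ((isPeriodicPt_mulTwoMod hi).minimalPeriod_le hm)
  rw [iterate_mulTwoMod hi, wt2_mul_two_pow_mod hi hjm]

lemma leader_mem_coset (hi : i < 2 ^ m - 1) : leader m i ∈ coset m i :=
  Nat.sInf_mem ⟨i, self_mem_coset hi⟩

lemma leader_le (hi : i < 2 ^ m - 1) : leader m i ≤ i :=
  Nat.sInf_le (self_mem_coset hi)

lemma wt2_leader (hi : i < 2 ^ m - 1) : wt2 (leader m i) = wt2 i :=
  wt2_of_mem_coset hi (leader_mem_coset hi)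

lemma mem_Dset_one_of_odd_wt2 {h : ℕ} (hm : Even m) (hi : i < 2 ^ m - 1) (hodd : Odd (wt2 i))
    (h1 : 1 < wt2 i) (hh : h < wt2 i) : i ∈ Dset m h 1 := by
  have hwt := wt2_leader hi
  have hne : leader m i ≠ 1 := by
    intro h1'
    rw [h1', wt2_one] at hwt
    omega
  have hlarge : ¬ (leader m i % 2 = 1 ∧ leader m i ≤ 2 ^ h - 1) := fun ⟨_, hle⟩ =>
    absurd (wt2_le_of_lt_two_pow (show leader m i < 2 ^ h by omega)) (by omega)
  have hmi : wt2 i ≤ m := wt2_le_of_lt_two_pow (show i < 2 ^ m by omega)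
  rw [Dset, Finset.mem_filter, Finset.mem_range, uu, if_neg hne, if_neg hlarge,
    vv_eq ((leader_le hi).trans_lt hi), hwt]
  refine ⟨hi, ?_⟩
  obtain ⟨a, rfl⟩ := hm
  obtain ⟨b, hb⟩ := hodd
  omega

end Coset

lemma leader_two_pow_mul_two_pow_sub_one {m j t : ℕ} (ht : 0 < t)
    (hi : 2 ^ j * (2 ^ t - 1) < 2 ^ m - 1) : leader m (2 ^ j * (2 ^ t - 1)) = 2 ^ t - 1 := by
  have hjm : j ≤ m := by
    by_contra! hjm
    have : 2 ^ m < 2 ^ j := Nat.pow_lt_pow_right one_lt_two hjm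
    have : 2 ^ j ≤ 2 ^ j * (2 ^ t - 1) := Nat.le_mul_of_pos_right _ (by
      have := Nat.one_lt_two_pow ht.ne'; omega)
    omega
  have hlt : 2 ^ t - 1 < 2 ^ m - 1 :=
    (Nat.le_mul_of_pos_left _ (Nat.two_pow_pos j)).trans_lt hi
  have hmem : 2 ^ t - 1 ∈ coset m (2 ^ j * (2 ^ t - 1)) := by
    have h := mul_two_pow_mod_mem_coset hi (m - j)
    rwa [mul_comm, mul_assoc, ← pow_add, Nat.add_sub_cancel' hjm, mul_comm,
      mul_two_pow_self_mod hlt] at h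
  refine le_antisymm (Nat.sInf_le hmem) (le_csInf ⟨_, hmem⟩ fun x hx => ?_)
  rw [← wt2_two_pow_sub_one t, ← wt2_two_pow_mul j, ← wt2_of_mem_coset hi hx]
  exact two_pow_wt2_sub_one_le x

lemma epsilon_two_pow_sub_one {h t : ℕ} (ht : 0 < t) (hth : t < h) :
    epsilon h (2 ^ t - 1) = h - t + 1 := by
  have hpow : 2 ^ t < 2 ^ h := Nat.pow_lt_pow_right one_lt_two hth
  rw [epsilon, if_neg (by have := Nat.one_le_two_pow (n := t); omega),
    Nat.sInf_upward_closed_eq_succ_iff]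
  · have hsplit : 2 ^ h = 2 ^ (h - t) * 2 ^ t := by rw [← pow_add, Nat.sub_add_cancel hth.le]
    have h2 : 2 ≤ 2 ^ (h - t) := Nat.le_self_pow (by omega) 2
    have h2t : 2 ≤ 2 ^ t := Nat.le_self_pow ht.ne' 2
    simp only [Set.mem_ofPred_eq, pow_succ, Nat.mul_sub_one, hsplit]
    generalize 2 ^ (h - t) = A at *
    generalize 2 ^ t = B at *
    have hAB : 2 * A ≤ A * B := by nlinarith
    have : A * 2 * B = 2 * (A * B) := by ring
    omega
  · intro k₁ k₂ hk hk₁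
    exact hk₁.trans (Nat.mul_le_mul_right _ (Nat.pow_le_pow_right two_pos hk))

lemma kappa_fifteen {h : ℕ} (h4 : 4 ≤ h) (he : Even h) : kappa h 15 = 1 := by
  rcases h4.eq_or_lt with rfl | h5
  · simp [kappa, epsilon]
  · rw [kappa, show 15 = 2 ^ 4 - 1 from rfl, epsilon_two_pow_sub_one (by norm_num) h5]
    obtain ⟨r, rfl⟩ := he
    omega

lemma two_pow_mul_fifteen_mem_Dset {m h j : ℕ} (hm : Even m) (hi : 2 ^ j * 15 < 2 ^ m - 1)
    (h4 : 4 ≤ h) (he : Even h) : 2 ^ j * 15 ∈ Dset m h 1 := by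
  have hlead : leader m (2 ^ j * 15) = 15 :=
    leader_two_pow_mul_two_pow_sub_one (t := 4) (by norm_num) hi
  have h15 : 15 < 2 ^ m - 1 := (Nat.le_mul_of_pos_left _ (Nat.two_pow_pos j)).trans_lt hi
  have h16 : 2 ^ 4 ≤ 2 ^ h := Nat.pow_le_pow_right two_pos h4
  rw [Dset, Finset.mem_filter, Finset.mem_range, uu, hlead, if_neg (by norm_num),
    if_pos ⟨rfl, by omega⟩, kappa_fifteen h4 he, vv_eq h15,
    show wt2 15 = 4 from wt2_two_pow_sub_one 4]
  obtain ⟨a, rfl⟩ := hm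
  omega

lemma mul_sub_mod_self {a n k : ℕ} (hk : k ≤ n) (h0 : 0 < a * k) (hlt : a * k < n) :
    a * (n - k) % n = n - a * k := by
  have ha : 1 ≤ a := Nat.pos_of_ne_zero (by rintro rfl; simp at h0)
  have h : a * (n - k) = (n - a * k) + (a - 1) * n := by
    zify [hk, ha, hlt.le]; ring
  rw [h, Nat.add_mul_mod_self_right, Nat.mod_eq_of_lt (by omega)]

section Multiples

variable {m T k : ℕ}

lemma two_pow_sub_one_mul_lt (hT : T < m) (hkm : k ≤ 2 ^ (m - T)) :
    (2 ^ T - 1) * k < 2 ^ m - 1 := by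
  have hsplit : 2 ^ m = 2 ^ T * 2 ^ (m - T) := by rw [← pow_add, Nat.add_sub_cancel' hT.le]
  have h2 : 2 ≤ 2 ^ (m - T) := Nat.le_self_pow (by omega) 2
  calc (2 ^ T - 1) * k ≤ (2 ^ T - 1) * 2 ^ (m - T) := Nat.mul_le_mul_left _ hkm
    _ = 2 ^ m - 2 ^ (m - T) := by rw [Nat.sub_one_mul, hsplit]
    _ < 2 ^ m - 1 := by have := Nat.le_mul_of_pos_left (2 ^ (m - T)) (Nat.two_pow_pos T); omega

lemma wt2_two_pow_sub_one_mul_mod (hT : T < m) (hk : 1 ≤ k) (hkT : k ≤ 2 ^ T)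
    (hkm : k ≤ 2 ^ (m - T)) : wt2 ((2 ^ T - 1) * k % (2 ^ m - 1)) = T := by
  rw [Nat.mod_eq_of_lt (two_pow_sub_one_mul_lt hT hkm), wt2_two_pow_sub_one_mul hk hkT]

lemma wt2_two_pow_sub_one_mul_sub_mod (hT0 : 0 < T) (hT : T < m) (hk : 1 ≤ k)
    (hkT : k ≤ 2 ^ T) (hkm : k ≤ 2 ^ (m - T)) :
    wt2 ((2 ^ T - 1) * (2 ^ m - 1 - k) % (2 ^ m - 1)) = m - T := by
  have hlt := two_pow_sub_one_mul_lt hT hkm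
  have hpos : 0 < (2 ^ T - 1) * k :=
    Nat.mul_pos (by have := Nat.one_lt_two_pow hT0.ne'; omega) hk
  have hkn : k < 2 ^ m := hkm.trans_lt (Nat.pow_lt_pow_right one_lt_two (by omega))
  rw [mul_sub_mod_self (by omega) hpos hlt, wt2_two_pow_sub_one_sub (by omega),
    wt2_two_pow_sub_one_mul hk hkT]

end Multiples

section Exceptional

variable {m c : ℕ}

lemma two_pow_add_one_mul_mod (hmc : m = 2 * c + 4) (hc : 1 ≤ c) :
    (2 ^ (c + 4) - 1) * (2 ^ c + 1) % (2 ^ m - 1) = 2 ^ c * 15 := by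
  subst hmc
  have h2 : 2 ≤ 2 ^ c := Nat.le_self_pow (by omega) 2
  rw [show 2 ^ (c + 4) = 16 * 2 ^ c by ring, show 2 ^ (2 * c + 4) = 16 * 2 ^ c * 2 ^ c by ring]
  generalize 2 ^ c = N at *
  have h : (16 * N - 1) * (N + 1) = N * 15 + (16 * N * N - 1) := by
    zify [show 1 ≤ 16 * N by omega, show 1 ≤ 16 * N * N by nlinarith]; ring
  have := Nat.mul_le_mul_left (16 * N) h2
  rw [h, Nat.add_mod_right, Nat.mod_eq_of_lt (by omega)]

lemma wt2_two_pow_add_two_mul_mod (hmc : m = 2 * c + 4) (hc : 1 ≤ c) :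
    wt2 ((2 ^ (c + 4) - 1) * (2 ^ c + 2) % (2 ^ m - 1)) = c + 4 := by
  subst hmc
  have h2 : 2 ≤ 2 ^ c := Nat.le_self_pow (by omega) 2
  have hval : (2 ^ (c + 4) - 1) * (2 ^ c + 2) % (2 ^ (2 * c + 4) - 1) =
      2 ^ (c + 5) - 1 - 2 ^ c := by
    rw [show 2 ^ (c + 4) = 16 * 2 ^ c by ring, show 2 ^ (2 * c + 4) = 16 * 2 ^ c * 2 ^ c by ring,
      show 2 ^ (c + 5) = 32 * 2 ^ c by ring]
    generalize 2 ^ c = N at *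
    have h : (16 * N - 1) * (N + 2) = (32 * N - 1 - N) + (16 * N * N - 1) := by
      zify [show 1 ≤ 16 * N by omega, show 1 ≤ 16 * N * N by nlinarith,
        show 1 ≤ 32 * N by omega, show N ≤ 32 * N - 1 by omega]; ring
    have := Nat.mul_le_mul_left (16 * N) h2
    rw [h, Nat.add_mod_right, Nat.mod_eq_of_lt (by omega)]
  rw [hval, wt2_two_pow_sub_one_sub (Nat.pow_lt_pow_right one_lt_two (by omega)), wt2_two_pow]
  omega

end Exceptional

section Ranges

variable {m c h : ℕ}

lemma mod_mem_Dset_of_wt2 (hmc : m = 2 * c + 4) (hc : 1 < c) (hodd : Odd c) (hhc : h < c) (x : ℕ)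
    (hx : wt2 (x % (2 ^ m - 1)) = c ∨ wt2 (x % (2 ^ m - 1)) = c + 4) :
    x % (2 ^ m - 1) ∈ Dset m h 1 := by
  have hn : 0 < 2 ^ m - 1 := by have := Nat.one_lt_two_pow (show m ≠ 0 by omega); omega
  refine mem_Dset_one_of_odd_wt2 ⟨c + 2, by omega⟩ (Nat.mod_lt _ hn) ?_ (by omega) (by omega)
  rcases hx with hx | hx <;> rw [hx]
  exacts [hodd, hodd.add_even (by decide)]

lemma mul_mod_mem_Dset_of_le (hmc : m = 2 * c + 4) (hc : 1 < c) (hodd : Odd c) (hhc : h < c)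
    {k : ℕ} (hk1 : 1 ≤ k) (hk2 : k ≤ 2 ^ c) :
    (2 ^ (c + 4) - 1) * k % (2 ^ m - 1) ∈ Dset m h 1 := by
  have hcT : 2 ^ c ≤ 2 ^ (c + 4) := Nat.pow_le_pow_right two_pos (by omega)
  refine mod_mem_Dset_of_wt2 hmc hc hodd hhc _ (.inr ?_)
  exact wt2_two_pow_sub_one_mul_mod (by omega) hk1 (hk2.trans hcT)
    (by rwa [show m - (c + 4) = c by omega])

lemma mul_mod_mem_Dset_of_ge (hmc : m = 2 * c + 4) (hc : 1 < c) (hodd : Odd c) (hhc : h < c)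
    {k : ℕ} (hk1 : 2 ^ m - 2 ^ c - 1 ≤ k) (hk2 : k ≤ 2 ^ m - 2) :
    (2 ^ (c + 4) - 1) * k % (2 ^ m - 1) ∈ Dset m h 1 := by
  have hc1 : 1 ≤ 2 ^ c := Nat.one_le_two_pow
  have hcT : 2 ^ c ≤ 2 ^ (c + 4) := Nat.pow_le_pow_right two_pos (by omega)
  have hcm : 2 ^ c < 2 ^ m := Nat.pow_lt_pow_right one_lt_two (by omega)
  obtain ⟨t, ht1, ht2, rfl⟩ : ∃ t, 1 ≤ t ∧ t ≤ 2 ^ c ∧ k = 2 ^ m - 1 - t :=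
    ⟨2 ^ m - 1 - k, by omega, by omega, by omega⟩
  refine mod_mem_Dset_of_wt2 hmc hc hodd hhc _ (.inl ?_)
  rw [wt2_two_pow_sub_one_mul_sub_mod (by omega) (by omega) ht1 (ht2.trans hcT)
    (by rwa [show m - (c + 4) = c by omega])]
  omega

end Ranges

theorem stmt14_general (m h : ℕ) (hm4 : m % 4 = 2) (hm : 10 ≤ m)
    (hh2 : h ≤ (m - 6) / 2) :
    (4 ≤ h → Even h → ∀ k, (1 ≤ k ∧ k ≤ 2 ^ ((m - 4) / 2) + 2) ∨
        (2 ^ m - 2 ^ ((m - 4) / 2) - 1 ≤ k ∧ k ≤ 2 ^ m - 2) →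
      (2 ^ ((m + 4) / 2) - 1) * k % (2 ^ m - 1) ∈ Dset m h 1) ∧
    (h ≤ 3 ∨ (4 ≤ h ∧ Odd h) → ∀ k, (1 ≤ k ∧ k ≤ 2 ^ ((m - 4) / 2)) ∨
        (2 ^ m - 2 ^ ((m - 4) / 2) - 1 ≤ k ∧ k ≤ 2 ^ m - 2) →
      (2 ^ ((m + 4) / 2) - 1) * k % (2 ^ m - 1) ∈ Dset m h 1) := by
  obtain ⟨c, hmc⟩ : ∃ c, m = 2 * c + 4 := ⟨(m - 4) / 2, by omega⟩
  rw [show (m + 4) / 2 = c + 4 by omega, show (m - 4) / 2 = c by omega]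
  have hc : 1 < c := by omega
  have hodd : Odd c := Nat.odd_iff.2 (by omega)
  have hhc : h < c := by omega
  have hmain : ∀ k, (1 ≤ k ∧ k ≤ 2 ^ c) ∨ (2 ^ m - 2 ^ c - 1 ≤ k ∧ k ≤ 2 ^ m - 2) →
      (2 ^ (c + 4) - 1) * k % (2 ^ m - 1) ∈ Dset m h 1 := by
    rintro k (⟨hk1, hk2⟩ | ⟨hk1, hk2⟩)
    exacts [mul_mod_mem_Dset_of_le hmc hc hodd hhc hk1 hk2,
      mul_mod_mem_Dset_of_ge hmc hc hodd hhc hk1 hk2]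
  refine ⟨fun h4 he k hk => ?_, fun _ => hmain⟩
  rcases hk with ⟨hk1, hk2⟩ | hk
  · rcases (by omega : k ≤ 2 ^ c ∨ k = 2 ^ c + 1 ∨ k = 2 ^ c + 2) with hk | rfl | rfl
    · exact hmain k (.inl ⟨hk1, hk⟩)
    · have hval := two_pow_add_one_mul_mod hmc hc.le
      rw [hval]
      exact two_pow_mul_fifteen_mem_Dset ⟨c + 2, by omega⟩ (hval ▸ Nat.mod_lt _ (by
        have := Nat.one_lt_two_pow (show m ≠ 0 by omega); omega)) h4 he
    · exact mod_mem_Dset_of_wt2 hmc hc hodd hhc _ (.inr (wt2_two_pow_add_two_mul_mod hmc hc.le))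
  · exact hmain k (.inr hk)

theorem stmt14 (m h : ℕ) (hm4 : m % 4 = 2) (hm : 10 ≤ m) (hh : 0 < h)
    (hh2 : h ≤ (m - 6) / 2) :
    (4 ≤ h → Even h → ∀ k, (1 ≤ k ∧ k ≤ 2 ^ ((m - 4) / 2) + 2) ∨
        (2 ^ m - 2 ^ ((m - 4) / 2) - 1 ≤ k ∧ k ≤ 2 ^ m - 2) →
      (2 ^ ((m + 4) / 2) - 1) * k % (2 ^ m - 1) ∈ Dset m h 1) ∧
    (h ≤ 3 ∨ (4 ≤ h ∧ Odd h) → ∀ k, (1 ≤ k ∧ k ≤ 2 ^ ((m - 4) / 2)) ∨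
        (2 ^ m - 2 ^ ((m - 4) / 2) - 1 ≤ k ∧ k ≤ 2 ^ m - 2) →
      (2 ^ ((m + 4) / 2) - 1) * k % (2 ^ m - 1) ∈ Dset m h 1) :=
  stmt14_general m h hm4 hm hh2
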